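/- Let α be a C² immersed closed plane curve (periodic with period 1, α′ never 0) having only finitely many inflection points in one period, all of which are s-inflection points, and such that μ̂(w, α) is finite for every unit vector w. Then the maximum over unit vectors w of μ̂(w, α) minus the minimum over unit vectors w of μ̂(w, α) is at most ν(α), the number of inflection points of α in one period. -/

import Mathlib

/-!
Fix unit vectors `w₁, w₂` and let `J` be the rotation by `π/2`. If `w₂ = ±w₁` the two height
functions have the same extrema. Otherwise `⟪α, w₂⟫ = c₁ ⟪α, w₁⟫ + c₂ ⟪α, J w₁⟫` with `c₂ ≠ 0`. Let
`a < b` be consecutive extrema of `⟪α, w₁⟫` with no inflection point between them, and put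
`f = ⟪α', w₁⟫`, `g = ⟪α', J w₁⟫`. The Wronskian `f g' - g f'` is the numerator of the curvature, so
it does not vanish on `(a, b)`; hence `g / f` is strictly monotone there, and since `f` vanishes at
both ends, `g (a)` and `g (b)` have opposite signs. So `c₁ f + c₂ g` has a zero in `(a, b)`, where
its derivative is `c₂ W / f ≠ 0`: an extremum of `⟪α, w₂⟫`. Every arc between consecutive extrema of
`⟪α, w₁⟫` therefore contains an inflection point or an extremum of `⟪α, w₂⟫`, and these points are
distinct modulo the period.
-/

open Real Set
open scoped RealInnerProductSpace

noncomputable section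

/-- ℝ² with the Euclidean inner product. -/
abbrev E2 : Type := EuclideanSpace ℝ (Fin 2)

/-- The signed curvature `κ_s = (x′y″ − y′x″)/((x′)² + (y′)²)^{3/2}` of a plane
curve `α = (x, y)`. -/
def signedCurv2 (α : ℝ → E2) (t : ℝ) : ℝ :=
  (deriv (fun s => α s 0) t * deriv (deriv (fun s => α s 1)) t -
    deriv (fun s => α s 1) t * deriv (deriv (fun s => α s 0)) t) / ‖deriv α t‖ ^ 3

/-- Rotation of the plane by angle `θ`. -/
def rot2 (θ : ℝ) (x : E2) : E2 :=
  WithLp.toLp 2 ![Real.cos θ * x 0 - Real.sin θ * x 1, Real.sin θ * x 0 + Real.cos θ * x 1]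

/-- The unit normal of `α` at parameter `t`: the rotation by `π/2` of the unit
tangent vector. -/
def unitNormal (α : ℝ → E2) (t : ℝ) : E2 :=
  rot2 (Real.pi / 2) (‖deriv α t‖⁻¹ • deriv α t)

/-- The number of local maxima of a (1-periodic) real function over one period. -/
def numLocalMax (f : ℝ → ℝ) : ℕ :=
  Set.ncard {t : ℝ | t ∈ Set.Ico (0:ℝ) 1 ∧ IsLocalMax f t}

/-- The set of local extrema of a (1-periodic) real function in one period. -/
def extremaSet (f : ℝ → ℝ) : Set ℝ :=
  {t : ℝ | t ∈ Set.Ico (0:ℝ) 1 ∧ (IsLocalMax f t ∨ IsLocalMin f t)}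

/-- `μ̂(w, α)`: the number of local extrema of `t ↦ ⟪α(t), w⟫` over one period. -/
def muHat (α : ℝ → E2) (w : E2) : ℕ :=
  Set.ncard (extremaSet (fun s => ⟪α s, w⟫))

/-- `g` changes sign at `t₀`: every neighbourhood of `t₀` contains points where `g`
is positive and points where it is negative. -/
def SignChangeAt (g : ℝ → ℝ) (t₀ : ℝ) : Prop :=
  ∀ ε > 0, (∃ s : ℝ, |s - t₀| < ε ∧ 0 < g s) ∧ (∃ s : ℝ, |s - t₀| < ε ∧ g s < 0)

/-- The set of inflection points (parameters where the signed curvature vanishes) of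
`α` in one period. -/
def inflectionSet (α : ℝ → E2) : Set ℝ :=
  {t : ℝ | t ∈ Set.Ico (0:ℝ) 1 ∧ signedCurv2 α t = 0}

open Function

theorem IsPreconnected.forall_pos_or_forall_neg {X : Type*} [TopologicalSpace X] {s : Set X}
    {f : X → ℝ} (hs : IsPreconnected s) (hf : ContinuousOn f s) (h0 : ∀ x ∈ s, f x ≠ 0) :
    (∀ x ∈ s, 0 < f x) ∨ ∀ x ∈ s, f x < 0 := by
  by_contra! h
  obtain ⟨⟨x, hx, hfx⟩, ⟨y, hy, hfy⟩⟩ := h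
  obtain ⟨z, hz, hfz⟩ := hs.intermediate_value hx hy hf ⟨hfx, hfy⟩
  exact h0 z hz hfz

theorem exists_mem_Ioo_eq_zero_of_mul_neg {f : ℝ → ℝ} {u v : ℝ} (huv : u ≤ v)
    (hf : ContinuousOn f (Icc u v)) (h : f u * f v < 0) : ∃ s ∈ Ioo u v, f s = 0 := by
  by_contra! h0
  have hne : ∀ x ∈ Icc u v, f x ≠ 0 := by
    intro x hx
    rcases eq_endpoints_or_mem_Ioo_of_mem_Icc hx with rfl | rfl | hx
    · exact left_ne_zero_of_mul h.ne
    · exact right_ne_zero_of_mul h.ne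
    · exact h0 x hx
  have hu : u ∈ Icc u v := left_mem_Icc.2 huv
  have hv : v ∈ Icc u v := right_mem_Icc.2 huv
  rcases isPreconnected_Icc.forall_pos_or_forall_neg hf hne with hpos | hneg
  · exact (mul_pos (hpos u hu) (hpos v hv)).not_gt h
  · exact (mul_pos_of_neg_of_neg (hneg u hu) (hneg v hv)).not_gt h

theorem isLocalExtr_of_hasDerivAt_of_ne_zero {f f' : ℝ → ℝ} {x c : ℝ}
    (hf : ∀ t, HasDerivAt f (f' t) t) (hf' : HasDerivAt f' c x) (hx : f' x = 0) (hc : c ≠ 0) :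
    IsLocalExtr f x := by
  have hd : deriv f = f' := funext fun t => (hf t).deriv
  rcases hc.lt_or_gt with hneg | hpos
  · exact (isLocalMax_of_deriv_deriv_neg (by rwa [hd, hf'.deriv]) (by rw [hd, hx])
      (hf x).continuousAt).isExtr
  · exact (isLocalMin_of_deriv_deriv_pos (by rwa [hd, hf'.deriv]) (by rw [hd, hx])
      (hf x).continuousAt).isExtr

theorem nonpos_and_nonneg_of_monotoneOn_div {a b : ℝ → ℝ} {u v : ℝ} (huv : u < v)
    (ha : ContinuousOn a (Icc u v)) (hb : ContinuousOn b (Icc u v)) (hau : a u = 0)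
    (hav : a v = 0) (hpos : ∀ t ∈ Ioo u v, 0 < a t)
    (hmono : MonotoneOn (fun t => b t / a t) (Ioo u v)) : b u ≤ 0 ∧ 0 ≤ b v := by
  obtain ⟨m, hm⟩ := nonempty_Ioo.2 huv
  set M := b m / a m
  have hu : u ∈ Icc u v := left_mem_Icc.2 huv.le
  have hv : v ∈ Icc u v := right_mem_Icc.2 huv.le
  -- `b ≤ M * a` on `(u, m)` and `M * a ≤ b` on `(m, v)` pass to the endpoints, where `a = 0`
  constructor
  · have hsub : Ioo u m ⊆ Icc u v := Ioo_subset_Icc_self.trans (Icc_subset_Icc_right hm.2.le)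
    have key : b u ≤ M * a u := ContinuousWithinAt.closure_le (g := fun t => M * a t)
      (by rw [closure_Ioo hm.1.ne]; exact left_mem_Icc.2 hm.1.le) ((hb u hu).mono hsub)
      (continuousWithinAt_const.mul ((ha u hu).mono hsub)) fun t ht => by
        have htuv : t ∈ Ioo u v := ⟨ht.1, ht.2.trans hm.2⟩
        simpa only [div_le_iff₀ (hpos t htuv)] using hmono htuv hm ht.2.le
    simpa [hau] using key
  · have hsub : Ioo m v ⊆ Icc u v := Ioo_subset_Icc_self.trans (Icc_subset_Icc_left hm.1.le)
    have key : M * a v ≤ b v := ContinuousWithinAt.closure_le (f := fun t => M * a t)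
      (by rw [closure_Ioo hm.2.ne]; exact right_mem_Icc.2 hm.2.le)
      (continuousWithinAt_const.mul ((ha v hv).mono hsub)) ((hb v hv).mono hsub) fun t ht => by
        have htuv : t ∈ Ioo u v := ⟨hm.1.trans ht.1, ht.2⟩
        simpa only [le_div_iff₀ (hpos t htuv)] using hmono hm htuv ht.1.le
    simpa [hav] using key

theorem mul_nonpos_of_wronskian_ne_zero {a b a' b' : ℝ → ℝ} {u v : ℝ} (huv : u < v)
    (ha : ∀ t, HasDerivAt a (a' t) t) (hb : ∀ t, HasDerivAt b (b' t) t)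
    (hau : a u = 0) (hav : a v = 0) (ha0 : ∀ t ∈ Ioo u v, a t ≠ 0)
    (hW : ∀ t ∈ Ioo u v, a t * b' t - b t * a' t ≠ 0) : b u * b v ≤ 0 := by
  have hac : Continuous a := continuous_iff_continuousAt.2 fun t => (ha t).continuousAt
  have hbc : Continuous b := continuous_iff_continuousAt.2 fun t => (hb t).continuousAt
  wlog hpos : ∀ t ∈ Ioo u v, 0 < a t generalizing a b a' b'
  · have hneg := (isPreconnected_Ioo.forall_pos_or_forall_neg hac.continuousOn ha0).resolve_left
      hpos
    have := this (a := fun t => -a t) (b := fun t => -b t) (fun t => (ha t).neg)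
      (fun t => (hb t).neg) (by simp [hau]) (by simp [hav]) (fun t ht => neg_ne_zero.2 (ha0 t ht))
      (fun t ht => by convert hW t ht using 1; ring)
      hac.neg hbc.neg (fun t ht => neg_pos.2 (hneg t ht))
    simpa using this
  -- `b / a` has derivative `W / a ^ 2`, which keeps one sign by Darboux's theorem
  have hq : ∀ t ∈ Ioo u v,
      HasDerivAt (fun t => b t / a t) ((a t * b' t - b t * a' t) / a t ^ 2) t := fun t ht =>
    ((hb t).div (ha t) (hpos t ht).ne').congr_deriv (by ring)
  have hqc : ContinuousOn (fun t => b t / a t) (Ioo u v) :=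
    fun t ht => (hq t ht).continuousAt.continuousWithinAt
  have hq' : ∀ t ∈ interior (Ioo u v), HasDerivWithinAt (fun t => b t / a t)
      ((a t * b' t - b t * a' t) / a t ^ 2) (interior (Ioo u v)) t := by
    rw [interior_Ioo]; exact fun t ht => (hq t ht).hasDerivWithinAt
  rcases hasDerivWithinAt_forall_lt_or_forall_gt_of_forall_ne (convex_Ioo u v)
    (fun t ht => (hq t ht).hasDerivWithinAt) (m := 0)
    (fun t ht => div_ne_zero (hW t ht) (pow_ne_zero 2 (hpos t ht).ne')) with hneg | hpos'
  · have hanti := strictAntiOn_of_hasDerivWithinAt_neg (convex_Ioo u v) hqc hq'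
      (by rwa [interior_Ioo])
    obtain ⟨h1, h2⟩ := nonpos_and_nonneg_of_monotoneOn_div (b := fun t => -b t) huv
      hac.continuousOn hbc.neg.continuousOn hau hav hpos fun x hx y hy hxy => by
        simpa [neg_div] using hanti.antitoneOn hx hy hxy
    nlinarith
  · have hmono := strictMonoOn_of_hasDerivWithinAt_pos (convex_Ioo u v) hqc hq'
      (by rwa [interior_Ioo])
    obtain ⟨h1, h2⟩ := nonpos_and_nonneg_of_monotoneOn_div huv hac.continuousOn
      hbc.continuousOn hau hav hpos hmono.monotoneOn
    nlinarith

theorem exists_isLocalExtr_mem_Ioo_of_wronskian_ne_zero {f g f' g' f'' g'' : ℝ → ℝ}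
    {u v : ℝ} (c₁ : ℝ) {c₂ : ℝ} (hf : ∀ t, HasDerivAt f (f' t) t)
    (hf' : ∀ t, HasDerivAt f' (f'' t) t) (hg : ∀ t, HasDerivAt g (g' t) t)
    (hg' : ∀ t, HasDerivAt g' (g'' t) t) (huv : u < v) (hfu : f' u = 0) (hfv : f' v = 0)
    (hgu : g' u ≠ 0) (hgv : g' v ≠ 0) (hf_extr : ∀ t ∈ Ioo u v, ¬IsLocalExtr f t)
    (hW : ∀ t ∈ Ioo u v, f' t * g'' t - g' t * f'' t ≠ 0) (hc₂ : c₂ ≠ 0) :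
    ∃ s ∈ Ioo u v, IsLocalExtr (fun t => c₁ * f t + c₂ * g t) s := by
  have hf'_ne : ∀ t ∈ Ioo u v, f' t ≠ 0 := fun t ht h0 =>
    hf_extr t ht <| isLocalExtr_of_hasDerivAt_of_ne_zero hf (hf' t) h0 fun h'' =>
      hW t ht (by rw [h0, h'']; ring)
  have hg'_sign : g' u * g' v < 0 :=
    (mul_nonpos_of_wronskian_ne_zero huv hf' hg' hfu hfv hf'_ne hW).lt_of_ne
      (mul_ne_zero hgu hgv)
  set h' := fun t => c₁ * f' t + c₂ * g' t
  have hh : ∀ t, HasDerivAt (fun t => c₁ * f t + c₂ * g t) (h' t) t := fun t =>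
    ((hf t).const_mul c₁).add ((hg t).const_mul c₂)
  have hh' : ∀ t, HasDerivAt h' (c₁ * f'' t + c₂ * g'' t) t := fun t =>
    ((hf' t).const_mul c₁).add ((hg' t).const_mul c₂)
  obtain ⟨s, hs, hs0⟩ := exists_mem_Ioo_eq_zero_of_mul_neg huv.le
    (fun t _ => (hh' t).continuousAt.continuousWithinAt) (by
      simp only [h', hfu, hfv, mul_zero, zero_add]
      nlinarith [sq_pos_of_ne_zero hc₂])
  refine ⟨s, hs, isLocalExtr_of_hasDerivAt_of_ne_zero hh (hh' s) hs0 fun h0 => hW s hs ?_⟩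
  -- at a zero of `h'`, `f' * h'' = c₂ * W`
  have : c₂ * (f' s * g'' s - g' s * f'' s) = 0 := by
    linear_combination f' s * h0 - f'' s * hs0
  exact (mul_eq_zero.1 this).resolve_left hc₂

theorem Function.Periodic.deriv {F : Type*} [NormedAddCommGroup F] [NormedSpace ℝ F]
    {f : ℝ → F} {c : ℝ} (hf : Periodic f c) : Periodic (deriv f) c := fun t => by
  rw [← deriv_comp_add_const, show (fun x => f (x + c)) = f from funext hf]

theorem Function.Periodic.isLocalExtr {G β : Type*} [AddGroup G] [TopologicalSpace G]
    [IsTopologicalAddGroup G] [Preorder β] {f : G → β} {c : G} (hf : Periodic f c) :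
    Periodic (IsLocalExtr f) c := fun t => propext <| by
  constructor
  · intro h
    simpa only [comp_def, hf _] using
      h.comp_continuous (g := (· + c)) (b := t) (continuous_add_const c).continuousAt
  · intro h
    have h' : IsLocalExtr f (t + c - c) := by rwa [add_sub_cancel_right]
    simpa only [comp_def, hf.sub_eq] using h'.comp_continuous (g := (· - c)) (b := t + c)
      (continuous_sub_right c).continuousAt

theorem Function.Periodic.apply_fract {β : Type*} {f : ℝ → β} (hf : Periodic f 1) (x : ℝ) :
    f (Int.fract x) = f x := by
  simpa [Int.self_sub_floor] using hf.sub_int_mul_eq (x := x) ⌊x⌋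

theorem ncard_le_ncard_of_forall_exists_between {P Q : ℝ → Prop} (hP : Periodic P 1)
    (hQ : Periodic Q 1) (hPfin : {t ∈ Ico (0 : ℝ) 1 | P t}.Finite)
    (hQfin : {t ∈ Ico (0 : ℝ) 1 | Q t}.Finite)
    (hgap : ∀ a, P a → ∀ b, P b → a < b → (∀ c ∈ Ioo a b, ¬P c) → ∃ c ∈ Ioo a b, Q c) :
    {t ∈ Ico (0 : ℝ) 1 | P t}.ncard ≤ {t ∈ Ico (0 : ℝ) 1 | Q t}.ncard := by
  set F := {t ∈ Ico (0 : ℝ) 1 | P t}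
  have hnext : ∀ x ∈ F, ∃ y, P y ∧ x < y ∧ ∀ z, P z → x < z → y ≤ z := by
    intro x hx
    set K := {z | P z ∧ x < z ∧ z ≤ x + 1}
    have hK : K ⊆ F ∪ (· + 1) '' F := by
      rintro z ⟨hz, hxz, hzx⟩
      by_cases hz1 : z < 1
      · exact Or.inl ⟨⟨hx.1.1.trans hxz.le, hz1⟩, hz⟩
      · refine Or.inr ⟨z - 1, ⟨⟨by linarith, by linarith [hx.1.2]⟩, ?_⟩, sub_add_cancel z 1⟩
        rwa [← hP, sub_add_cancel]
    obtain ⟨y, ⟨hy, hxy, -⟩, hmin⟩ := Set.exists_min_image K id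
      ((hPfin.union (hPfin.image _)).subset hK) ⟨x + 1, hP x ▸ hx.2, by linarith, le_rfl⟩
    refine ⟨y, hy, hxy, fun z hz hxz => ?_⟩
    by_cases hzx : z ≤ x + 1
    · exact hmin z ⟨hz, hxz, hzx⟩
    · exact (hmin (x + 1) ⟨hP x ▸ hx.2, by linarith, le_rfl⟩).trans (not_le.1 hzx).le
  have hτ : ∀ x ∈ F, ∃ τ, Q τ ∧ x < τ ∧ ∀ z, P z → x < z → τ < z := by
    intro x hx
    obtain ⟨y, hy, hxy, hmin⟩ := hnext x hx
    obtain ⟨τ, hτ, hQτ⟩ := hgap x hx.2 y hy hxy fun c hc hPc => (hmin c hPc hc.1).not_gt hc.2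
    exact ⟨τ, hQτ, hτ.1, fun z hz hxz => hτ.2.trans_le (hmin z hz hxz)⟩
  choose! τ hτQ hxτ hτlt using hτ
  -- `τ x < τ y < τ x + 1`, so the fractional parts differ
  have hsep : ∀ x ∈ F, ∀ y ∈ F, x < y → Int.fract (τ x) ≠ Int.fract (τ y) := by
    intro x hx y hy hxy hfr
    have h1 : τ x < τ y := (hτlt x hx y hy.2 hxy).trans (hxτ y hy)
    have h2 : τ y < τ x + 1 :=
      (hτlt y hy (x + 1) (hP x ▸ hx.2) (by linarith [hx.1.1, hy.1.2])).trans
        (by linarith [hxτ x hx])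
    obtain ⟨n, hn⟩ := Int.fract_eq_fract.1 hfr.symm
    have : (0 : ℝ) < n ∧ (n : ℝ) < 1 := ⟨by linarith, by linarith⟩
    norm_cast at this
    omega
  refine Set.ncard_le_ncard_of_injOn (fun x => Int.fract (τ x))
    (fun x hx => ⟨⟨Int.fract_nonneg _, Int.fract_lt_one _⟩, by rw [hQ.apply_fract]; exact hτQ x hx⟩)
    (fun x hx y hy hxy => ?_) hQfin
  by_contra hne
  rcases lt_or_gt_of_ne hne with h | h
  · exact hsep x hx y hy h hxy
  · exact hsep y hy x hx h hxy.symm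

namespace E2

theorem inner_eq (v w : E2) : ⟪v, w⟫ = v 0 * w 0 + v 1 * w 1 := by
  simp [PiLp.inner_apply, Fin.sum_univ_two, mul_comm]

theorem norm_sq_eq (v : E2) : ‖v‖ ^ 2 = v 0 ^ 2 + v 1 ^ 2 := by
  simp [EuclideanSpace.real_norm_sq_eq, Fin.sum_univ_two]

theorem inner_rot2_pi_div_two (v w : E2) : ⟪v, rot2 (π / 2) w⟫ = w 0 * v 1 - w 1 * v 0 := by
  simp [inner_eq, rot2]; ring

variable {w : E2}

theorem inner_eq_inner_mul_add_inner_rot2_mul (hw : ‖w‖ = 1) (z u : E2) :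
    ⟪z, u⟫ = ⟪u, w⟫ * ⟪z, w⟫ + ⟪u, rot2 (π / 2) w⟫ * ⟪z, rot2 (π / 2) w⟫ := by
  have h : w 0 ^ 2 + w 1 ^ 2 = 1 := by rw [← norm_sq_eq, hw, one_pow]
  simp only [inner_rot2_pi_div_two]
  simp only [inner_eq]
  linear_combination (-(z 0 * u 0) - z 1 * u 1) * h

theorem inner_sq_add_inner_rot2_sq (hw : ‖w‖ = 1) (v : E2) :
    ⟪v, w⟫ ^ 2 + ⟪v, rot2 (π / 2) w⟫ ^ 2 = ‖v‖ ^ 2 := by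
  have h : w 0 ^ 2 + w 1 ^ 2 = 1 := by rw [← norm_sq_eq, hw, one_pow]
  simp only [inner_rot2_pi_div_two]
  simp only [inner_eq, norm_sq_eq]
  linear_combination (v 0 ^ 2 + v 1 ^ 2) * h

theorem inner_mul_inner_rot2_sub (hw : ‖w‖ = 1) (v v' : E2) :
    ⟪v, w⟫ * ⟪v', rot2 (π / 2) w⟫ - ⟪v, rot2 (π / 2) w⟫ * ⟪v', w⟫ = ⟪v', rot2 (π / 2) v⟫ := by
  have h : w 0 ^ 2 + w 1 ^ 2 = 1 := by rw [← norm_sq_eq, hw, one_pow]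
  simp only [inner_rot2_pi_div_two]
  simp only [inner_eq]
  linear_combination (v 0 * v' 1 - v 1 * v' 0) * h

theorem eq_or_eq_neg_of_inner_rot2_eq_zero {w₁ w₂ : E2} (hw₁ : ‖w₁‖ = 1) (hw₂ : ‖w₂‖ = 1)
    (h : ⟪w₂, rot2 (π / 2) w₁⟫ = 0) : w₂ = w₁ ∨ w₂ = -w₁ := by
  have hc := inner_sq_add_inner_rot2_sq hw₁ w₂
  rw [h, hw₂] at hc
  have hn : w₁ 0 ^ 2 + w₁ 1 ^ 2 = 1 := by rw [← norm_sq_eq, hw₁, one_pow]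
  rw [inner_rot2_pi_div_two] at h
  have hw : ∀ i, w₂ i = ⟪w₂, w₁⟫ * w₁ i := by
    simp only [Fin.forall_fin_two, inner_eq]
    exact ⟨by linear_combination (-w₂ 0) * hn - w₁ 1 * h,
      by linear_combination (-w₂ 1) * hn + w₁ 0 * h⟩
  rcases sq_eq_one_iff.1 (by linarith : ⟪w₂, w₁⟫ ^ 2 = 1) with h1 | h1
  · left; ext i; rw [hw i, h1, one_mul]
  · right; ext i; rw [hw i, h1]; simp

end E2

theorem deriv_euclideanSpace_apply {ι : Type*} [Fintype ι] {f : ℝ → EuclideanSpace ℝ ι}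
    (hf : Differentiable ℝ f) (i : ι) : deriv (fun s => f s i) = fun s => deriv f s i :=
  funext fun s =>
    ((EuclideanSpace.proj (𝕜 := ℝ) i).hasFDerivAt.comp_hasDerivAt s (hf s).hasDerivAt).deriv

theorem signedCurv2_eq {α : ℝ → E2} (hα : ContDiff ℝ 2 α) (t : ℝ) :
    signedCurv2 α t = ⟪deriv (deriv α) t, rot2 (π / 2) (deriv α t)⟫ / ‖deriv α t‖ ^ 3 := by
  simp only [signedCurv2, deriv_euclideanSpace_apply (hα.differentiable two_ne_zero),
    deriv_euclideanSpace_apply hα.differentiable_deriv_two, E2.inner_rot2_pi_div_two]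

theorem signedCurv2_periodic {α : ℝ → E2} {c : ℝ} (hα : Periodic α c) :
    Periodic (signedCurv2 α) c := fun t => by
  have hx : ∀ i, Periodic (fun s => α s i) c := fun i s => by simp only [hα s]
  simp only [signedCurv2, (hx 0).deriv t, (hx 1).deriv t, (hx 0).deriv.deriv t,
    (hx 1).deriv.deriv t, hα.deriv t]

theorem extremaSet_eq (f : ℝ → ℝ) : extremaSet f = {t ∈ Ico (0 : ℝ) 1 | IsLocalExtr f t} :=
  Set.ext fun _ => and_congr_right fun _ => or_comm

theorem exists_isLocalExtr_inner_mem_Ioo {α : ℝ → E2} {w₁ w₂ : E2} {a b : ℝ}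
    (hα : ContDiff ℝ 2 α) (hreg : ∀ t, deriv α t ≠ 0) (hw₁ : ‖w₁‖ = 1)
    (hw : ⟪w₂, rot2 (π / 2) w₁⟫ ≠ 0) (hab : a < b)
    (ha : IsLocalExtr (fun s => ⟪α s, w₁⟫) a) (hb : IsLocalExtr (fun s => ⟪α s, w₁⟫) b)
    (hgap : ∀ t ∈ Ioo a b, ¬IsLocalExtr (fun s => ⟪α s, w₁⟫) t)
    (hκ : ∀ t ∈ Ioo a b, signedCurv2 α t ≠ 0) :
    ∃ t ∈ Ioo a b, IsLocalExtr (fun s => ⟪α s, w₂⟫) t := by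
  set J := rot2 (π / 2) w₁
  have hv : ∀ w t, HasDerivAt (fun s => ⟪α s, w⟫) ⟪deriv α t, w⟫ t := fun w t => by
    simpa using ((hα.differentiable two_ne_zero) t).hasDerivAt.inner ℝ (hasDerivAt_const t w)
  have hv' : ∀ w t, HasDerivAt (fun s => ⟪deriv α s, w⟫) ⟪deriv (deriv α) t, w⟫ t := fun w t => by
    simpa using (hα.differentiable_deriv_two t).hasDerivAt.inner ℝ (hasDerivAt_const t w)
  have hJ_ne : ∀ t, ⟪deriv α t, w₁⟫ = 0 → ⟪deriv α t, J⟫ ≠ 0 := fun t h0 hJ => by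
    have := E2.inner_sq_add_inner_rot2_sq hw₁ (deriv α t)
    rw [h0, hJ] at this
    exact hreg t (norm_eq_zero.1 (pow_eq_zero_iff two_ne_zero |>.1 (by linarith)))
  have hfa := ha.hasDerivAt_eq_zero (hv w₁ a)
  have hfb := hb.hasDerivAt_eq_zero (hv w₁ b)
  simp_rw [E2.inner_eq_inner_mul_add_inner_rot2_mul hw₁ _ w₂]
  refine exists_isLocalExtr_mem_Ioo_of_wronskian_ne_zero _ (hv w₁) (hv' w₁) (hv J) (hv' J) hab
    hfa hfb (hJ_ne a hfa) (hJ_ne b hfb) hgap (fun t ht => ?_) hw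
  rw [E2.inner_mul_inner_rot2_sub hw₁]
  intro h0
  exact hκ t ht (by rw [signedCurv2_eq hα, h0, zero_div])

theorem muHat_variation_le_inflections_general (α : ℝ → E2)
    (hsmooth : ContDiff ℝ 2 α) (hper : Function.Periodic α 1)
    (hreg : ∀ t : ℝ, deriv α t ≠ 0)
    (hfin : (inflectionSet α).Finite)
    (hext : ∀ w : E2, ‖w‖ = 1 → (extremaSet (fun s => ⟪α s, w⟫)).Finite) :
    ∀ w₁ w₂ : E2, ‖w₁‖ = 1 → ‖w₂‖ = 1 →
      muHat α w₁ ≤ muHat α w₂ + (inflectionSet α).ncard := by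
  intro w₁ w₂ hw₁ hw₂
  have hheight : ∀ w : E2, Periodic (fun s => ⟪α s, w⟫) 1 := fun w s => by simp only [hper s]
  have hunion : {t ∈ Ico (0 : ℝ) 1 | IsLocalExtr (fun s => ⟪α s, w₂⟫) t ∨ signedCurv2 α t = 0} =
      extremaSet (fun s => ⟪α s, w₂⟫) ∪ inflectionSet α := by
    rw [extremaSet_eq, Set.sep_or]; rfl
  have hTfin := hunion ▸ (hext w₂ hw₂).union hfin
  calc muHat α w₁
      ≤ {t ∈ Ico (0 : ℝ) 1 | IsLocalExtr (fun s => ⟪α s, w₂⟫) t ∨ signedCurv2 α t = 0}.ncard := by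
        rw [muHat, extremaSet_eq]
        rcases eq_or_ne ⟪w₂, rot2 (π / 2) w₁⟫ 0 with hpar | hpar
        · refine Set.ncard_le_ncard (fun t ht => ⟨ht.1, Or.inl ?_⟩) hTfin
          rcases E2.eq_or_eq_neg_of_inner_rot2_eq_zero hw₁ hw₂ hpar with rfl | rfl
          · exact ht.2
          · simpa only [inner_neg_right] using ht.2.neg
        refine ncard_le_ncard_of_forall_exists_between (hheight w₁).isLocalExtr
          (fun t => by simp only [(hheight w₂).isLocalExtr t, signedCurv2_periodic hper t])
          (extremaSet_eq _ ▸ hext w₁ hw₁) hTfin fun a ha b hb hab hgap => ?_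
        by_cases hκ : ∃ t ∈ Ioo a b, signedCurv2 α t = 0
        · obtain ⟨t, ht, h0⟩ := hκ
          exact ⟨t, ht, Or.inr h0⟩
        obtain ⟨t, ht, h⟩ := exists_isLocalExtr_inner_mem_Ioo hsmooth hreg hw₁ hpar hab ha hb hgap
          fun t ht h0 => hκ ⟨t, ht, h0⟩
        exact ⟨t, ht, Or.inl h⟩
    _ ≤ muHat α w₂ + (inflectionSet α).ncard := hunion ▸ Set.ncard_union_le _ _

/-- For an immersed closed plane curve all of whose inflection points are
s-inflection points, the maximum of `μ̂(w, α)` over unit vectors `w` exceeds the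
minimum by at most the number `ν(α)` of inflection points in one period; stated
equivalently: `μ̂(w₁, α) ≤ μ̂(w₂, α) + ν(α)` for all unit `w₁, w₂`. -/
theorem muHat_variation_le_inflections (α : ℝ → E2)
    (hsmooth : ContDiff ℝ 2 α) (hper : Function.Periodic α 1)
    (hreg : ∀ t : ℝ, deriv α t ≠ 0)
    (hfin : (inflectionSet α).Finite)
    (hs : ∀ t : ℝ, signedCurv2 α t = 0 → SignChangeAt (signedCurv2 α) t)
    (hext : ∀ w : E2, ‖w‖ = 1 → (extremaSet (fun s => ⟪α s, w⟫)).Finite) :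
    ∀ w₁ w₂ : E2, ‖w₁‖ = 1 → ‖w₂‖ = 1 →
      muHat α w₁ ≤ muHat α w₂ + (inflectionSet α).ncard :=
  muHat_variation_le_inflections_general α hsmooth hper hreg hfin hext

end
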